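/- arXiv:2009.06966 — 4 statements merged into one kernel-verified Lean document; each statement's English description precedes it below -/
import Mathlib

section
/- Let K_O be a t×t real symmetric positive semidefinite matrix with all diagonal entries at most δ, let K_P be a t×t real symmetric positive semidefinite matrix, and let τ > 0. Then log det(I_t + (1/τ)(I_t + (1/τ)K_P)^{-1} K_O) ≤ t·δ/τ. -/
/-!
Put `A = 1 + τ⁻¹ K_P` and `C = τ⁻¹ K_O = S²` with `S` Hermitian. By the Weinstein–Aronszajn
identity `det (1 + A⁻¹ C) = det (1 + S A⁻¹ S)`, and `S A⁻¹ S` is positive semidefinite, so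
`log x ≤ x - 1` applied to its eigenvalues bounds the log-determinant by `tr (S A⁻¹ S) = tr (A⁻¹ C)`.
Since `0 ≤ 1 - A⁻¹`, this is at most `tr C ≤ t δ / τ`.
-/

open Matrix

namespace Matrix

open scoped ComplexOrder

variable {n 𝕜 : Type*} [Fintype n] [DecidableEq n] [RCLike 𝕜]

open scoped MatrixOrder in
theorem PosSemidef.exists_isHermitian_mul_self_eq {A : Matrix n n 𝕜} (hA : A.PosSemidef) :
    ∃ S : Matrix n n 𝕜, S.IsHermitian ∧ S * S = A :=
  ⟨CFC.sqrt A, (CFC.sqrt_nonneg A).posSemidef.isHermitian, CFC.sqrt_mul_sqrt_self A hA.nonneg⟩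

theorem PosSemidef.trace_mul_nonneg {A B : Matrix n n 𝕜} (hA : A.PosSemidef)
    (hB : B.PosSemidef) : 0 ≤ (A * B).trace := by
  obtain ⟨S, hS, rfl⟩ := hA.exists_isHermitian_mul_self_eq
  have hSBS : (S * B * S).PosSemidef := by
    simpa only [hS.eq] using hB.conjTranspose_mul_mul_same S
  calc 0 ≤ (S * B * S).trace := hSBS.trace_nonneg
    _ = (S * S * B).trace := trace_mul_cycle S B S

/-- Writing `A = 1 + P`, we have `1 - A⁻¹ = A⁻¹ P = A⁻¹ (P + P P) A⁻¹`, a congruence of a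
positive semidefinite matrix. -/
theorem PosSemidef.posSemidef_one_sub_inv_one_add {P : Matrix n n 𝕜} (hP : P.PosSemidef) :
    (1 - (1 + P)⁻¹).PosSemidef := by
  have hA : (1 + P).PosDef := PosDef.one.add_posSemidef hP
  have hdet : IsUnit (1 + P).det := hA.isUnit.map detMonoidHom
  have hsub : 1 - (1 + P)⁻¹ = (1 + P)⁻¹ * P := by
    calc 1 - (1 + P)⁻¹ = (1 + P)⁻¹ * (1 + P - 1) := by
          rw [Matrix.mul_sub, nonsing_inv_mul _ hdet, Matrix.mul_one]
      _ = (1 + P)⁻¹ * P := by rw [add_sub_cancel_left]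
  have hcongr : 1 - (1 + P)⁻¹ = ((1 + P)⁻¹)ᴴ * (P + Pᴴ * P) * (1 + P)⁻¹ := by
    rw [hA.inv.isHermitian.eq, hP.isHermitian.eq, ← mul_one_add P, Matrix.mul_assoc,
      Matrix.mul_assoc, mul_nonsing_inv _ hdet, Matrix.mul_one, hsub]
  rw [hcongr]
  exact (hP.add (posSemidef_conjTranspose_mul_self P)).conjTranspose_mul_mul_same _

theorem PosSemidef.trace_inv_one_add_mul_le {P C : Matrix n n 𝕜} (hP : P.PosSemidef)
    (hC : C.PosSemidef) : ((1 + P)⁻¹ * C).trace ≤ C.trace := by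
  have h := hP.posSemidef_one_sub_inv_one_add.trace_mul_nonneg hC
  rwa [Matrix.sub_mul, Matrix.one_mul, trace_sub, sub_nonneg] at h

theorem PosSemidef.log_det_one_add_le_trace {N : Matrix n n ℝ} (hN : N.PosSemidef) :
    Real.log (1 + N).det ≤ N.trace := by
  have hA : (1 + N).PosDef := PosDef.one.add_posSemidef hN
  have hμ := hA.eigenvalues_pos
  calc Real.log (1 + N).det = ∑ i, Real.log (hA.1.eigenvalues i) := by
        rw [hA.1.det_eq_prod_eigenvalues, ← Real.log_prod fun i _ => (hμ i).ne']
        simp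
    _ ≤ ∑ i, (hA.1.eigenvalues i - 1) :=
        Finset.sum_le_sum fun i _ => Real.log_le_sub_one_of_pos (hμ i)
    _ = (1 + N).trace - Fintype.card n := by simp [hA.1.trace_eq_sum_eigenvalues]
    _ = N.trace := by rw [trace_add, trace_one]; ring

theorem PosSemidef.log_det_one_add_inv_one_add_mul_le_trace {P C : Matrix n n ℝ}
    (hP : P.PosSemidef) (hC : C.PosSemidef) :
    Real.log (1 + (1 + P)⁻¹ * C).det ≤ C.trace := by
  obtain ⟨S, hS, rfl⟩ := hC.exists_isHermitian_mul_self_eq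
  have hSAS : (S * (1 + P)⁻¹ * S).PosSemidef := by
    simpa only [hS.eq] using
      (PosDef.one.add_posSemidef hP).inv.posSemidef.conjTranspose_mul_mul_same S
  calc Real.log (1 + (1 + P)⁻¹ * (S * S)).det = Real.log (1 + S * (1 + P)⁻¹ * S).det := by
        rw [← Matrix.mul_assoc, det_one_add_mul_comm, Matrix.mul_assoc]
    _ ≤ (S * (1 + P)⁻¹ * S).trace := hSAS.log_det_one_add_le_trace
    _ = ((1 + P)⁻¹ * (S * S)).trace := by rw [trace_mul_cycle, trace_mul_comm]
    _ ≤ (S * S).trace := hP.trace_inv_one_add_mul_le hC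

end Matrix

theorem logdet_residual_bound {t : ℕ} (K_P K_O : Matrix (Fin t) (Fin t) ℝ)
    (hP : K_P.PosSemidef) (hO : K_O.PosSemidef) {δ τ : ℝ}
    (hdiag : ∀ i, K_O i i ≤ δ) (hτ : 0 < τ) :
    Real.log ((1 + τ⁻¹ • ((1 + τ⁻¹ • K_P)⁻¹ * K_O)).det) ≤ t * δ / τ := by
  have hτ' : 0 ≤ τ⁻¹ := inv_nonneg.mpr hτ.le
  have htrace : K_O.trace ≤ t * δ := by
    simpa [trace] using Finset.sum_le_card_nsmul Finset.univ _ _ fun i _ => hdiag i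
  rw [← Matrix.mul_smul]
  calc _ ≤ (τ⁻¹ • K_O).trace :=
        (hP.smul hτ').log_det_one_add_inv_one_add_mul_le_trace (hO.smul hτ')
    _ = τ⁻¹ * K_O.trace := trace_smul _ _
    _ ≤ τ⁻¹ * (t * δ) := mul_le_mul_of_nonneg_left htrace hτ'
    _ = t * δ / τ := by ring
end

section
/- Let K be a t×t real symmetric positive semidefinite matrix that decomposes as K = K_P + K_O, where K_P = A Aᵀ for some t×D matrix A whose rows a_s satisfy ‖a_s‖₂² ≤ k̄, and K_O is positive semidefinite with all diagonal entries at most δ. Then for any τ > 0, (1/2) log det(I_t + (1/τ)K) ≤ (1/2) D log(1 + t·k̄/(τ·D)) + (1/2) t·δ/τ. -/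
/-!
Split `τ⁻¹ K = M + N` with `M = τ⁻¹ A Aᵀ` and `N = τ⁻¹ K_O`. Conjugating by `√N` shows
`log det (1 + M + N) ≤ log det (1 + M) + tr N`, and `tr N ≤ t δ / τ`. By Sylvester's identity
`det (1 + τ⁻¹ A Aᵀ) = det (1 + τ⁻¹ Aᵀ A)`, a `D × D` determinant; writing its logarithm as
`∑ log (1 + λᵢ)` over the `D` eigenvalues, concavity of `log` bounds it by `D log (1 + tr / D)`,
and `tr (Aᵀ A) ≤ t k̄` by the row bound.
-/

open Matrix Finset

theorem Real.sum_log_one_add_le_card_mul_log {ι : Type*} (s : Finset ι) {x : ι → ℝ}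
    (hx : ∀ i ∈ s, 0 ≤ x i) :
    ∑ i ∈ s, Real.log (1 + x i) ≤ #s * Real.log (1 + (∑ i ∈ s, x i) / #s) := by
  rcases s.eq_empty_or_nonempty with rfl | hs
  · simp
  have hcard : (0 : ℝ) < #s := by exact_mod_cast hs.card_pos
  have hjensen := strictConcaveOn_log_Ioi.concaveOn.le_map_sum (t := s) (w := fun _ => (#s : ℝ)⁻¹)
    (p := fun i => 1 + x i) (fun _ _ => by positivity) (by simp [hcard.ne'])
    (fun i hi => show 0 < 1 + x i by linarith [hx i hi])
  simp only [smul_eq_mul, ← mul_sum, sum_add_distrib, sum_const, nsmul_eq_mul, mul_one] at hjensen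
  rw [mul_add, inv_mul_cancel₀ hcard.ne'] at hjensen
  simp only [inv_mul_eq_div] at hjensen
  calc ∑ i ∈ s, Real.log (1 + x i) = #s * ((∑ i ∈ s, Real.log (1 + x i)) / #s) := by
        field_simp
    _ ≤ #s * Real.log (1 + (∑ i ∈ s, x i) / #s) := by gcongr

namespace Matrix

lemma trace_transpose_mul_self {m n R : Type*} [Fintype m] [Fintype n] [CommSemiring R]
    (A : Matrix m n R) : (Aᵀ * A).trace = ∑ s, ∑ i, A s i ^ 2 := by
  simp only [trace, diag, mul_apply, transpose_apply, sq]
  exact sum_comm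

variable {n : Type*} [Fintype n] [DecidableEq n]

lemma IsHermitian.det_one_add {A : Matrix n n ℝ} (hA : A.IsHermitian) :
    (1 + A).det = ∏ i, (1 + hA.eigenvalues i) := by
  set U := hA.eigenvectorUnitary
  conv_lhs => rw [hA.spectral_theorem, ← map_one (Unitary.conjStarAlgAut ℝ _ U), ← map_add,
    Unitary.conjStarAlgAut_apply, det_mul_comm, ← mul_assoc, Unitary.star_mul_self_of_mem U.2,
    one_mul, ← diagonal_one, diagonal_add, det_diagonal]
  rfl

namespace PosSemidef

variable {A B : Matrix n n ℝ}

lemma log_det_one_add_eq_sum (hA : A.PosSemidef) :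
    Real.log (1 + A).det = ∑ i, Real.log (1 + hA.1.eigenvalues i) := by
  rw [hA.1.det_one_add, Real.log_prod]
  intro i _
  linarith [hA.eigenvalues_nonneg i]

lemma log_det_one_add_le_trace_s8 (hA : A.PosSemidef) : Real.log (1 + A).det ≤ A.trace := by
  rw [hA.log_det_one_add_eq_sum, hA.1.trace_eq_sum_eigenvalues]
  simp only [RCLike.ofReal_real_eq_id, id]
  refine sum_le_sum fun i _ => ?_
  have := hA.eigenvalues_nonneg i
  linarith [Real.log_le_sub_one_of_pos (x := 1 + hA.1.eigenvalues i) (by linarith)]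

lemma log_det_one_add_le_card_mul_log (hA : A.PosSemidef) :
    Real.log (1 + A).det ≤ Fintype.card n * Real.log (1 + A.trace / Fintype.card n) := by
  rw [hA.log_det_one_add_eq_sum, hA.1.trace_eq_sum_eigenvalues]
  simp only [RCLike.ofReal_real_eq_id, id]
  exact Real.sum_log_one_add_le_card_mul_log univ fun i _ => hA.eigenvalues_nonneg i

lemma one_sub_inv_one_add (hA : A.PosSemidef) : (1 - (1 + A)⁻¹).PosSemidef := by
  have hP : (1 + A).PosDef := PosDef.one.add_posSemidef hA
  set X := (1 + A)⁻¹
  have hXP : X * (1 + A) = 1 := nonsing_inv_mul _ hP.det_pos.ne'.isUnit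
  have hPX : (1 + A) * X = 1 := mul_nonsing_inv _ hP.det_pos.ne'.isUnit
  have hXh : Xᴴ = X := by rw [conjTranspose_nonsing_inv, hP.isHermitian.eq]
  have hsq : (A * A).PosSemidef := by
    simpa only [hA.1.eq] using posSemidef_self_mul_conjTranspose A
  have hfactor : 1 - X = X * (A + A * A) * Xᴴ := by
    rw [hXh, ← mul_one_add A A, ← mul_assoc, mul_assoc _ _ X, hPX, mul_one]
    calc 1 - X = X * (1 + A) - X := by rw [hXP]
      _ = X * A := by rw [mul_add, mul_one, add_sub_cancel_left]
  rw [hfactor]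
  exact (hA.add hsq).mul_mul_conjTranspose_same X

open scoped MatrixOrder in
/-- With `S = √B`, `det (1 + A + B) = det (1 + A) · det (1 + S (1 + A)⁻¹ S)`, and
`S (1 + A)⁻¹ S ≤ S S = B` since `(1 + A)⁻¹ ≤ 1`. -/
lemma log_det_one_add_add_le (hA : A.PosSemidef) (hB : B.PosSemidef) :
    Real.log (1 + (A + B)).det ≤ Real.log (1 + A).det + B.trace := by
  have hP : (1 + A).PosDef := PosDef.one.add_posSemidef hA
  set X := (1 + A)⁻¹
  set S := CFC.sqrt B
  have hSS : S * S = B := CFC.sqrt_mul_sqrt_self B hB.nonneg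
  have hSh : Sᴴ = S := (CFC.sqrt_nonneg B).posSemidef.1
  have hfactor : (1 + (A + B)).det = (1 + A).det * (1 + S * X * Sᴴ).det := by
    have hPX : (1 + A) * X = 1 := mul_nonsing_inv _ hP.det_pos.ne'.isUnit
    rw [hSh, mul_assoc, ← det_one_add_mul_comm, ← det_mul, mul_assoc X, hSS, mul_add, mul_one,
      ← mul_assoc, hPX, one_mul, add_assoc]
  have hR : (S * X * Sᴴ).PosSemidef := hP.inv.posSemidef.mul_mul_conjTranspose_same S
  have hRB : (S * X * Sᴴ).trace ≤ B.trace := by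
    have := (hA.one_sub_inv_one_add.mul_mul_conjTranspose_same S).trace_nonneg
    rw [hSh, mul_sub, sub_mul, mul_one, hSS, trace_sub, sub_nonneg] at this
    rw [hSh]
    exact this
  rw [hfactor, Real.log_mul hP.det_pos.ne' (PosDef.one.add_posSemidef hR).det_pos.ne']
  linarith [hR.log_det_one_add_le_trace_s8]

end PosSemidef

variable {m : Type*} [Fintype m] [DecidableEq m]

lemma log_det_one_add_smul_mul_transpose_le (A : Matrix m n ℝ) {c k : ℝ} (hc : 0 ≤ c)
    (hrows : ∀ s, ∑ i, A s i ^ 2 ≤ k) :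
    Real.log (1 + c • (A * Aᵀ)).det
      ≤ Fintype.card n * Real.log (1 + c * (Fintype.card m * k) / Fintype.card n) := by
  have hX : (c • (Aᵀ * A)).PosSemidef := by
    simpa using (posSemidef_conjTranspose_mul_self A).smul hc
  have hsylvester : (1 + c • (A * Aᵀ)).det = (1 + c • (Aᵀ * A)).det := by
    rw [← smul_mul, det_one_add_mul_comm, Matrix.mul_smul]
  have htrace : (c • (Aᵀ * A)).trace ≤ c * (Fintype.card m * k) := by
    rw [trace_smul, smul_eq_mul, trace_transpose_mul_self]
    gcongr
    simpa using sum_le_card_nsmul univ _ k fun s _ => hrows s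
  rw [hsylvester]
  refine hX.log_det_one_add_le_card_mul_log.trans ?_
  have := hX.trace_nonneg
  gcongr

end Matrix

theorem information_gain_bound_general {t D : ℕ} (K K_O : Matrix (Fin t) (Fin t) ℝ)
    (A : Matrix (Fin t) (Fin D) ℝ) {kbar δ τ : ℝ}
    (hdecomp : K = A * Aᵀ + K_O)
    (hrows : ∀ s, ∑ i, (A s i) ^ 2 ≤ kbar)
    (hO : K_O.PosSemidef) (hdiag : ∀ i, K_O i i ≤ δ) (hτ : 0 < τ) :
    (1 / 2) * Real.log ((1 + τ⁻¹ • K).det)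
      ≤ (1 / 2) * D * Real.log (1 + t * kbar / (τ * D))
        + (1 / 2) * t * δ / τ := by
  have hτ' : 0 ≤ τ⁻¹ := inv_nonneg.mpr hτ.le
  have hproj_psd : (τ⁻¹ • (A * Aᵀ)).PosSemidef := by
    simpa using (posSemidef_self_mul_conjTranspose A).smul hτ'
  have hsplit : Real.log (1 + τ⁻¹ • K).det
      ≤ Real.log (1 + τ⁻¹ • (A * Aᵀ)).det + (τ⁻¹ • K_O).trace := by
    rw [hdecomp, smul_add]
    exact hproj_psd.log_det_one_add_add_le (hO.smul hτ')
  have hproj := log_det_one_add_smul_mul_transpose_le A hτ' hrows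
  rw [Fintype.card_fin, Fintype.card_fin, inv_mul_eq_div, div_div] at hproj
  have hresid : (τ⁻¹ • K_O).trace ≤ t * δ / τ := by
    rw [trace_smul, smul_eq_mul, inv_mul_eq_div]
    gcongr
    simpa [trace] using sum_le_card_nsmul univ _ δ fun i _ => hdiag i
  calc (1 / 2) * Real.log ((1 + τ⁻¹ • K).det)
      ≤ (1 / 2) * (D * Real.log (1 + t * kbar / (τ * D)) + t * δ / τ) := by
        gcongr
        exact hsplit.trans (add_le_add hproj hresid)
    _ = (1 / 2) * D * Real.log (1 + t * kbar / (τ * D)) + (1 / 2) * t * δ / τ := by ring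

theorem information_gain_bound {t D : ℕ} (K K_O : Matrix (Fin t) (Fin t) ℝ)
    (A : Matrix (Fin t) (Fin D) ℝ) {kbar δ τ : ℝ}
    (hK : K.PosSemidef) (hdecomp : K = A * Aᵀ + K_O)
    (hrows : ∀ s, ∑ i, (A s i) ^ 2 ≤ kbar)
    (hO : K_O.PosSemidef) (hdiag : ∀ i, K_O i i ≤ δ) (hτ : 0 < τ) :
    (1 / 2) * Real.log ((1 + τ⁻¹ • K).det)
      ≤ (1 / 2) * D * Real.log (1 + t * kbar / (τ * D))
        + (1 / 2) * t * δ / τ :=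
  information_gain_bound_general K K_O A hdecomp hrows hO hdiag hτ
end

section
/- Suppose γ: ℕ → ℝ satisfies, for all T and all D ∈ ℕ with D ≥ 1, γ(T) ≤ (1/2) D log(1 + k̄T/(τD)) + (1/2) δ(D) T/τ, where δ(D) ≤ C ψ² D^{1−β} for constants C, ψ, k̄, τ > 0 and β > 1. Then choosing D = ⌈(Cψ²T/τ)^{1/β} · log^{−1/β}(1 + k̄T/τ)⌉ gives γ(T) ≤ ((Cψ²T/τ)^{1/β} log^{−1/β}(1 + k̄T/τ) + 1) · log(1 + k̄T/τ) for all T ≥ 1. -/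
/-! With `x = Cψ²T/τ` and `L = log (1 + k̄T/τ)`, the real dimension `D* = (x / L)^(1/β)` balances
the two terms: `D* L = x D*^(1-β)`. For `D = ⌈D*⌉` the log term only grows when `τD` is replaced
by `τ`, the tail term only grows when `D` is replaced by `D* ≤ D`, and `D ≤ D* + 1`, so
`γ T ≤ (D* + 1) L / 2 + D* L / 2 ≤ (D* + 1) L`. -/

open Real

lemma log_one_add_div_le_log_one_add_div {a s t : ℝ} (ha : 0 ≤ a) (hs : 0 < s) (hst : s ≤ t) :
    log (1 + a / t) ≤ log (1 + a / s) := by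
  have hat : 0 ≤ a / t := div_nonneg ha (hs.le.trans hst)
  gcongr

section Balance

variable {x L β : ℝ}

lemma rpow_inv_mul_rpow_neg_inv_rpow (hx : 0 ≤ x) (hL : 0 ≤ L) (hβ : β ≠ 0) :
    (x ^ (1 / β) * L ^ (-(1 / β))) ^ β = x / L := by
  rw [mul_rpow (by positivity) (by positivity), ← rpow_mul hx, ← rpow_mul hL,
    one_div, inv_mul_cancel₀ hβ, neg_mul, inv_mul_cancel₀ hβ, rpow_one, rpow_neg_one, div_eq_mul_inv]

lemma mul_rpow_one_sub_balanced (hx : 0 < x) (hL : 0 < L) (hβ : β ≠ 0) :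
    x * (x ^ (1 / β) * L ^ (-(1 / β))) ^ (1 - β) = x ^ (1 / β) * L ^ (-(1 / β)) * L := by
  have hpos : 0 < x ^ (1 / β) * L ^ (-(1 / β)) := by positivity
  rw [rpow_sub hpos, rpow_one, rpow_inv_mul_rpow_neg_inv_rpow hx.le hL.le hβ]
  field_simp

lemma half_mul_add_half_mul_rpow_ceil_le (hx : 0 < x) (hL : 0 < L) (hβ : 1 < β) :
    let D := ⌈x ^ (1 / β) * L ^ (-(1 / β))⌉₊
    (1 / 2) * D * L + (1 / 2) * (x * (D : ℝ) ^ (1 - β))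
      ≤ (x ^ (1 / β) * L ^ (-(1 / β)) + 1) * L := by
  intro D
  set d := x ^ (1 / β) * L ^ (-(1 / β))
  have hd : 0 < d := by positivity
  have hdD : d ≤ D := Nat.le_ceil d
  have hDd : (D : ℝ) ≤ d + 1 := (Nat.ceil_lt_add_one hd.le).le
  have htail : x * (D : ℝ) ^ (1 - β) ≤ d * L := by
    rw [← mul_rpow_one_sub_balanced hx hL (by linarith)]
    exact mul_le_mul_of_nonneg_left (rpow_le_rpow_of_nonpos hd hdD (by linarith)) hx.le
  linarith [mul_le_mul_of_nonneg_right hDd hL.le]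

end Balance

theorem gamma_poly_bound (γ : ℕ → ℝ) (δ : ℕ → ℝ)
    {C ψ kbar τ β : ℝ} (hC : 0 < C) (hψ : 0 < ψ) (hk : 0 < kbar)
    (hτ : 0 < τ) (hβ : 1 < β)
    (hγ : ∀ T D : ℕ, 1 ≤ D →
      γ T ≤ (1 / 2) * D * Real.log (1 + kbar * T / (τ * D))
              + (1 / 2) * δ D * T / τ)
    (hδ : ∀ D : ℕ, 1 ≤ D → δ D ≤ C * ψ ^ 2 * (D : ℝ) ^ (1 - β)) :
    ∀ T : ℕ, 1 ≤ T →
      γ T ≤ ((C * ψ ^ 2 * T / τ) ^ (1 / β)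
                * (Real.log (1 + kbar * T / τ)) ^ (-(1 / β)) + 1)
              * Real.log (1 + kbar * T / τ) := by
  intro T hT
  have hT0 : (0 : ℝ) < T := by exact_mod_cast hT
  set x := C * ψ ^ 2 * T / τ
  set L := log (1 + kbar * T / τ)
  have hx : 0 < x := by positivity
  have hL : 0 < L := log_pos (by linarith [show 0 < kbar * T / τ by positivity])
  set D := ⌈x ^ (1 / β) * L ^ (-(1 / β))⌉₊
  have hD : 1 ≤ D := Nat.ceil_pos.mpr (by positivity)
  have hD1 : (1 : ℝ) ≤ D := by exact_mod_cast hD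
  have hlog : log (1 + kbar * T / (τ * D)) ≤ L :=
    log_one_add_div_le_log_one_add_div (by positivity) hτ (le_mul_of_one_le_right hτ.le hD1)
  have htail : (1 / 2) * δ D * T / τ ≤ (1 / 2) * (x * (D : ℝ) ^ (1 - β)) := by
    calc (1 / 2) * δ D * T / τ = (1 / 2) * (δ D * (T / τ)) := by ring
      _ ≤ (1 / 2) * (C * ψ ^ 2 * (D : ℝ) ^ (1 - β) * (T / τ)) := by gcongr; exact hδ D hD
      _ = (1 / 2) * (x * (D : ℝ) ^ (1 - β)) := by ring
  calc γ T ≤ (1 / 2) * D * log (1 + kbar * T / (τ * D)) + (1 / 2) * δ D * T / τ := hγ T D hD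
    _ ≤ (1 / 2) * D * L + (1 / 2) * (x * (D : ℝ) ^ (1 - β)) := by gcongr
    _ ≤ (x ^ (1 / β) * L ^ (-(1 / β)) + 1) * L := half_mul_add_half_mul_rpow_ceil_le hx hL hβ
end

section
/- Suppose for each T ≥ 1 and each D ≥ 1 we have γ(T) ≤ (1/2) D log(1 + k̄T/(τD)) + (1/2)(C₁/C₂) exp(−C₂ D) ψ² T/τ, for constants k̄, τ, C₁, C₂, ψ > 0. Then choosing D = ⌈(1/C₂) log(C₁ψ²T/(τC₂))⌉ yields γ(T) ≤ ((1/C₂)(log T + log(C₁ψ²/(τC₂))) + 1) · log(1 + k̄T/τ) for all sufficiently large T. -/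
/-! Taking `D = ⌈log (c T) / C₂⌉₊` with `c = C₁ ψ² / (τ C₂)` makes the tail term
`(1/2) c T e^{-C₂ D}` at most `1/2`, while the first term is at most
`(1/2) (log (c T) / C₂ + 1) log (1 + k̄ T / τ)` because `D ≥ 1`. Once `c T > 1` and
`log (1 + k̄ T / τ) ≥ 1`, the constant `1/2` is absorbed by the other half of the bound. -/

open Real Filter

lemma mul_exp_neg_mul_le_one {y C D : ℝ} (hy : 0 < y) (h : log y ≤ C * D) :
    y * exp (-C * D) ≤ 1 := by
  rw [← exp_log hy, ← exp_add, exp_le_one_iff]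
  linarith

lemma log_one_add_div_mul_le {a τ D : ℝ} (ha : 0 ≤ a) (hτ : 0 < τ) (hD : 1 ≤ D) :
    log (1 + a / (τ * D)) ≤ log (1 + a / τ) := by
  have hdiv : a / (τ * D) ≤ a / τ :=
    div_le_div_of_nonneg_left ha hτ (le_mul_of_one_le_right hτ.le hD)
  exact log_le_log (by positivity) (by linarith)

/-- The choice `D = ⌈log y / C⌉₊` balances a bound `D ℓ(D) / 2 + y e^{-C D} / 2`
with `ℓ ≤ L` on `D ≥ 1`. -/
lemma le_of_forall_le_half_mul_add_half_mul_exp {g y C L : ℝ} {ℓ : ℕ → ℝ}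
    (hC : 0 < C) (hy : 1 < y) (hL : 1 ≤ L) (hℓ : ∀ D : ℕ, 1 ≤ D → ℓ D ≤ L)
    (hg : ∀ D : ℕ, 1 ≤ D → g ≤ (1 / 2) * D * ℓ D + (1 / 2) * y * exp (-C * D)) :
    g ≤ (log y / C + 1) * L := by
  set x := log y / C
  have hx : 0 < x := div_pos (log_pos hy) hC
  have hD : 1 ≤ ⌈x⌉₊ := Nat.one_le_iff_ne_zero.mpr (Nat.ceil_pos.mpr hx).ne'
  have hDx : (⌈x⌉₊ : ℝ) ≤ x + 1 := (Nat.ceil_lt_add_one hx.le).le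
  have hfirst : (⌈x⌉₊ : ℝ) * ℓ ⌈x⌉₊ ≤ (x + 1) * L :=
    (mul_le_mul_of_nonneg_left (hℓ _ hD) (Nat.cast_nonneg _)).trans
      (mul_le_mul_of_nonneg_right hDx (by linarith))
  have htail : y * exp (-C * ⌈x⌉₊) ≤ 1 := by
    refine mul_exp_neg_mul_le_one (by linarith) ?_
    calc log y = C * x := (mul_div_cancel₀ _ hC.ne').symm
      _ ≤ C * ⌈x⌉₊ := mul_le_mul_of_nonneg_left (Nat.le_ceil x) hC.le
  have hbig : 1 ≤ (x + 1) * L := by nlinarith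
  linarith [hg _ hD]

theorem gamma_exp_bound (γ : ℕ → ℝ)
    {kbar τ C₁ C₂ ψ : ℝ} (hk : 0 < kbar) (hτ : 0 < τ)
    (hC₁ : 0 < C₁) (hC₂ : 0 < C₂) (hψ : 0 < ψ)
    (hγ : ∀ T D : ℕ, 1 ≤ T → 1 ≤ D →
      γ T ≤ (1 / 2) * D * Real.log (1 + kbar * T / (τ * D))
              + (1 / 2) * (C₁ / C₂) * Real.exp (-C₂ * D) * ψ ^ 2 * T / τ) :
    ∃ T₀ : ℕ, ∀ T : ℕ, T₀ ≤ T →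
      γ T ≤ ((1 / C₂) * (Real.log T + Real.log (C₁ * ψ ^ 2 / (τ * C₂))) + 1)
              * Real.log (1 + kbar * T / τ) := by
  set c := C₁ * ψ ^ 2 / (τ * C₂)
  have hc : 0 < c := by positivity
  have hT : Tendsto (fun T : ℕ => (T : ℝ)) atTop atTop := tendsto_natCast_atTop_atTop
  have hcT_large : ∀ᶠ T : ℕ in atTop, 1 < c * T :=
    (hT.const_mul_atTop hc).eventually_gt_atTop 1
  have hlog_large : ∀ᶠ T : ℕ in atTop, 1 ≤ log (1 + kbar * T / τ) :=
    (tendsto_log_atTop.comp (tendsto_atTop_add_const_left _ 1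
      ((hT.const_mul_atTop hk).atTop_div_const hτ))).eventually_ge_atTop 1
  obtain ⟨T₀, hT₀⟩ :=
    eventually_atTop.mp ((hcT_large.and hlog_large).and (eventually_ge_atTop 1))
  refine ⟨T₀, fun T hT => ?_⟩
  obtain ⟨⟨hcT, hlog⟩, hT1⟩ := hT₀ T hT
  have hTpos : (0 : ℝ) < T := by exact_mod_cast hT1
  have key := le_of_forall_le_half_mul_add_half_mul_exp (g := γ T)
    (ℓ := fun D : ℕ => log (1 + kbar * T / (τ * D))) hC₂ hcT hlog
    (fun D hD => log_one_add_div_mul_le (by positivity) hτ (by exact_mod_cast hD))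
    (fun D hD => (hγ T D hT1 hD).trans_eq (by simp only [c]; field_simp))
  rwa [log_mul hc.ne' hTpos.ne', add_comm (log c), div_eq_inv_mul, ← one_div] at key
end
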